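/- Let J_{2m} and J_{2n} be the standard symplectic matrices, H a real 2m×2m symmetric matrix, A = J_{2m}H, and S a real 2m×2n matrix with Sᵀ J_{2m} S = J_{2n}. Let z : ℝ → ℝ^{2n} be differentiable with z′(t) = (J_{2n} Sᵀ J_{2m}⁻¹ A S)·z(t) for all t, and suppose y₀ = S·z(0). Then for all t, ½ (S·z(t))ᵀ H (S·z(t)) = ½ y₀ᵀ H y₀: the energy of the original Hamiltonian system ẏ = Ay is preserved by the projection method y_B = Sz and equals its initial value. -/

import Mathlib

/-!
With `K = Sᵀ H S`, the projected system is `ż = J K z` because `J_{2m}⁻¹ A = H`. For `J`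
skew-symmetric and `K` symmetric, the derivative of `zᵀ K z` along this flow is
`2 (K z)ᵀ J (K z) = 0`, so `zᵀ K z` is constant; and `zᵀ K z` is exactly the energy
`(S z)ᵀ H (S z)` of the lifted state.
-/

open Matrix

namespace Matrix

variable {ι κ : Type*} [Fintype ι]

theorem dotProduct_mulVec_self_eq_zero_of_transpose_eq_neg {B : Matrix ι ι ℝ} (hB : Bᵀ = -B)
    (v : ι → ℝ) : v ⬝ᵥ B *ᵥ v = 0 := by
  have h := dotProduct_transpose_mulVec B v v
  rw [hB, neg_mulVec, dotProduct_neg] at h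
  linarith

theorem mulVec_dotProduct_mulVec_mulVec [Fintype κ] (S : Matrix ι κ ℝ) (H : Matrix ι ι ℝ)
    (v : κ → ℝ) :
    (S *ᵥ v) ⬝ᵥ H *ᵥ (S *ᵥ v) = v ⬝ᵥ (Sᵀ * H * S) *ᵥ v := by
  rw [dotProduct_mulVec, vecMul_mulVec, ← dotProduct_mulVec, mulVec_mulVec]

theorem transpose_mul_mul_self_of_transpose_eq {H : Matrix ι ι ℝ} (hH : Hᵀ = H)
    (S : Matrix ι κ ℝ) : (Sᵀ * H * S)ᵀ = Sᵀ * H * S := by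
  rw [transpose_mul, transpose_mul, hH, transpose_transpose, Matrix.mul_assoc]

end Matrix

section Derivatives

variable {ι : Type*} [Fintype ι] {f g : ℝ → ι → ℝ} {f' g' : ι → ℝ} {t : ℝ}

theorem HasDerivAt.dotProduct (hf : HasDerivAt f f' t) (hg : HasDerivAt g g' t) :
    HasDerivAt (fun s ↦ f s ⬝ᵥ g s) (f' ⬝ᵥ g t + f t ⬝ᵥ g') t := by
  simp only [_root_.dotProduct, ← Finset.sum_add_distrib]
  exact HasDerivAt.fun_sum fun i _ ↦ (hasDerivAt_pi.1 hf i).mul (hasDerivAt_pi.1 hg i)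

theorem HasDerivAt.mulVec {κ : Type*} [Fintype κ] (B : Matrix κ ι ℝ) (hf : HasDerivAt f f' t) :
    HasDerivAt (fun s ↦ B *ᵥ f s) (B *ᵥ f') t :=
  (Matrix.mulVecLin B).toContinuousLinearMap.hasFDerivAt.comp_hasDerivAt t hf

end Derivatives

theorem dotProduct_mulVec_eq_of_hasDerivAt_skew_mul {ι : Type*} [Fintype ι]
    {J K : Matrix ι ι ℝ} (hJ : Jᵀ = -J) (hK : Kᵀ = K) {z : ℝ → ι → ℝ}
    (hz : ∀ t, HasDerivAt z ((J * K) *ᵥ z t) t) (t s : ℝ) :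
    z t ⬝ᵥ K *ᵥ z t = z s ⬝ᵥ K *ᵥ z s := by
  have hderiv : ∀ t, HasDerivAt (fun t ↦ z t ⬝ᵥ K *ᵥ z t) 0 t := by
    intro t
    set w := K *ᵥ z t
    have hzw : z t ᵥ* K = w := by rw [← hK, vecMul_transpose]
    have hflow : (J * K) *ᵥ z t = J *ᵥ w := (mulVec_mulVec _ _ _).symm
    convert (hz t).dotProduct ((hz t).mulVec K) using 1
    rw [hflow, dotProduct_comm, dotProduct_mulVec (z t), hzw,
      dotProduct_mulVec_self_eq_zero_of_transpose_eq_neg hJ, zero_add]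
  exact is_const_of_deriv_eq_zero (fun t ↦ (hderiv t).differentiableAt)
    (fun t ↦ (hderiv t).deriv) t s

theorem bjpm_energy_preserving_general {m n : ℕ}
    (J2m : Matrix (Fin m ⊕ Fin m) (Fin m ⊕ Fin m) ℝ)
    (hJ2m : J2m = Matrix.fromBlocks 0 1 (-1) 0)
    (J2n : Matrix (Fin n ⊕ Fin n) (Fin n ⊕ Fin n) ℝ)
    (hJ2n : J2n = Matrix.fromBlocks 0 1 (-1) 0)
    (H : Matrix (Fin m ⊕ Fin m) (Fin m ⊕ Fin m) ℝ)
    (hH : Hᵀ = H)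
    (A : Matrix (Fin m ⊕ Fin m) (Fin m ⊕ Fin m) ℝ)
    (hA : A = J2m * H)
    (S : Matrix (Fin m ⊕ Fin m) (Fin n ⊕ Fin n) ℝ)
    (z : ℝ → ((Fin n ⊕ Fin n) → ℝ))
    (hz : ∀ t : ℝ, HasDerivAt z ((J2n * Sᵀ * J2m⁻¹ * A * S) *ᵥ z t) t)
    (y₀ : (Fin m ⊕ Fin m) → ℝ)
    (hy₀ : y₀ = S *ᵥ z 0)
    (t : ℝ) :
    (1 / 2 : ℝ) * ((S *ᵥ z t) ⬝ᵥ (H *ᵥ (S *ᵥ z t))) =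
      (1 / 2 : ℝ) * (y₀ ⬝ᵥ (H *ᵥ y₀)) := by
  have hJ2m_eq_neg_J : J2m = -J (Fin m) ℝ := by rw [hJ2m, J, fromBlocks_neg]; simp
  have hJ2n_eq_neg_J : J2n = -J (Fin n) ℝ := by rw [hJ2n, J, fromBlocks_neg]; simp
  have hJ2m_inv : J2m⁻¹ = J (Fin m) ℝ :=
    inv_eq_left_inv (by rw [hJ2m_eq_neg_J, Matrix.mul_neg, J_squared, neg_neg])
  have hJ2m_inv_mul : J2m⁻¹ * A = H := by
    rw [hA, ← Matrix.mul_assoc, hJ2m_inv, hJ2m_eq_neg_J, Matrix.mul_neg, J_squared, neg_neg,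
      Matrix.one_mul]
  have hflow : J2n * Sᵀ * J2m⁻¹ * A * S = J2n * (Sᵀ * H * S) := by
    rw [Matrix.mul_assoc (J2n * Sᵀ), hJ2m_inv_mul]
    simp only [Matrix.mul_assoc]
  have hJ2n_skew : J2nᵀ = -J2n := by rw [hJ2n_eq_neg_J, transpose_neg, J_transpose]
  rw [hy₀, mulVec_dotProduct_mulVec_mulVec, mulVec_dotProduct_mulVec_mulVec,
    dotProduct_mulVec_eq_of_hasDerivAt_skew_mul hJ2n_skew
      (transpose_mul_mul_self_of_transpose_eq hH S) (hflow ▸ hz) t 0]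

/-- Energy preservation for projection methods based on `J`-orthogonal bases:
with `H` symmetric, `A = J_{2m} H`, `Sᵀ J_{2m} S = J_{2n}`, `z` solving the
projected system `ż = (J_{2n} Sᵀ J_{2m}⁻¹ A S) z`, and `y₀ = S z(0)`, the
energy `½ yᵀ H y` of `ẏ = A y` is preserved by `y_B = S z` and equals its
initial value: `½ (S z(t))ᵀ H (S z(t)) = ½ y₀ᵀ H y₀` for all `t`. -/
theorem bjpm_energy_preserving {m n : ℕ}
    (J2m : Matrix (Fin m ⊕ Fin m) (Fin m ⊕ Fin m) ℝ)
    (hJ2m : J2m = Matrix.fromBlocks 0 1 (-1) 0)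
    (J2n : Matrix (Fin n ⊕ Fin n) (Fin n ⊕ Fin n) ℝ)
    (hJ2n : J2n = Matrix.fromBlocks 0 1 (-1) 0)
    (H : Matrix (Fin m ⊕ Fin m) (Fin m ⊕ Fin m) ℝ)
    (hH : Hᵀ = H)
    (A : Matrix (Fin m ⊕ Fin m) (Fin m ⊕ Fin m) ℝ)
    (hA : A = J2m * H)
    (S : Matrix (Fin m ⊕ Fin m) (Fin n ⊕ Fin n) ℝ)
    (hS : Sᵀ * J2m * S = J2n)
    (z : ℝ → ((Fin n ⊕ Fin n) → ℝ))
    (hz : ∀ t : ℝ, HasDerivAt z ((J2n * Sᵀ * J2m⁻¹ * A * S) *ᵥ z t) t)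
    (y₀ : (Fin m ⊕ Fin m) → ℝ)
    (hy₀ : y₀ = S *ᵥ z 0)
    (t : ℝ) :
    (1 / 2 : ℝ) * ((S *ᵥ z t) ⬝ᵥ (H *ᵥ (S *ᵥ z t))) =
      (1 / 2 : ℝ) * (y₀ ⬝ᵥ (H *ᵥ y₀)) :=
  bjpm_energy_preserving_general J2m hJ2m J2n hJ2n H hH A hA S z hz y₀ hy₀ t
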